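/- Let (G,D,O) be an augmented orientation with maximum augmented in-degree k. If the number of even Eulerian structures in (G,D,O) differs from the number of odd Eulerian structures, then AT(G) − 1 ≤ α(W_{G,D}) ≤ k. -/

import Mathlib

/-!
Orienting every factor of `W_{G,D}` from tail to head changes it only by a sign:
`W_{G,D} = ± ∏_{u → v} (x_v^{D(uv)} - x_u^{D(uv)})`. Expanding this product, choosing the tail
term on a set `A` of arcs gives `(-1)^|A|` times the monomial whose exponent at `v` is the
augmented in-degree of `v` outside `A` plus its augmented out-degree inside `A`; this is the
augmented in-degree vector exactly when `A` is an Eulerian structure. Hence that monomial has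
coefficient `±(#even - #odd) ≠ 0`; it has maximal degree because `W_{G,D}` is homogeneous, and all
its exponents are at most `k`, so `α(W_{G,D}) ≤ k`. Finally `f_G ∣ W_{G,D}` with `f_G`
homogeneous, so every top-degree monomial of `W_{G,D}` dominates a top-degree monomial of `f_G`,
whence `α(f_G) ≤ α(W_{G,D})`.
-/

attribute [local instance] Classical.propDecidable

/-- `alphaP Q` is the minimum `k` such that some monomial of `Q` with nonzero
coefficient has total degree equal to `Q.totalDegree` and every individual
variable exponent at most `k`. -/
noncomputable def alphaP {n : ℕ} (Q : MvPolynomial (Fin n) ℤ) : ℕ :=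
  sInf {k | ∃ m ∈ Q.support, (∑ i, m i) = Q.totalDegree ∧ ∀ i, m i ≤ k}

/-- The graph polynomial `∏_{i<j, {v_i,v_j} ∈ E} (x_i - x_j)`. -/
noncomputable def graphPoly {n : ℕ} (G : SimpleGraph (Fin n)) : MvPolynomial (Fin n) ℤ :=
  ∏ p ∈ Finset.univ.filter (fun p : Fin n × Fin n => p.1 < p.2 ∧ G.Adj p.1 p.2),
    (MvPolynomial.X p.1 - MvPolynomial.X p.2)

/-- The Alon–Tarsi number `AT(G) = α(f_G) + 1`. -/
noncomputable def AT {n : ℕ} (G : SimpleGraph (Fin n)) : ℕ := alphaP (graphPoly G) + 1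

/-- `dir` is an orientation of the graph `G`: every edge receives exactly one direction. -/
def IsOrientation {n : ℕ} (G : SimpleGraph (Fin n)) (dir : Fin n → Fin n → Prop) : Prop :=
  (∀ u v, dir u v → G.Adj u v) ∧ (∀ u v, G.Adj u v → (dir u v ↔ ¬ dir v u))

/-- The in-degree of a vertex in an orientation. -/
noncomputable def inDeg {n : ℕ} (dir : Fin n → Fin n → Prop) (v : Fin n) : ℕ :=
  (Finset.univ.filter fun u => dir u v).card

/-- The augmented graph polynomial `W_{G,D} = ∏_{i<j, e={v_i,v_j}∈E} (x_i^{D(e)} - x_j^{D(e)})`. -/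
noncomputable def augPoly {n : ℕ} (G : SimpleGraph (Fin n)) (D : Sym2 (Fin n) → ℕ) :
    MvPolynomial (Fin n) ℤ :=
  ∏ p ∈ Finset.univ.filter (fun p : Fin n × Fin n => p.1 < p.2 ∧ G.Adj p.1 p.2),
    (MvPolynomial.X p.1 ^ D s(p.1, p.2) - MvPolynomial.X p.2 ^ D s(p.1, p.2))

/-- The augmented in-degree of `v` in a set `A` of directed edges with strengths `D`. -/
noncomputable def augIn {n : ℕ} (D : Sym2 (Fin n) → ℕ) (A : Finset (Fin n × Fin n))
    (v : Fin n) : ℕ :=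
  ∑ p ∈ A.filter (fun p => p.2 = v), D s(p.1, p.2)

/-- The augmented out-degree of `v` in a set `A` of directed edges with strengths `D`. -/
noncomputable def augOut {n : ℕ} (D : Sym2 (Fin n) → ℕ) (A : Finset (Fin n × Fin n))
    (v : Fin n) : ℕ :=
  ∑ p ∈ A.filter (fun p => p.1 = v), D s(p.1, p.2)

/-- An Eulerian structure: a set of directed edges of the augmented orientation `(dir, D)`
in which every vertex has augmented in-degree equal to augmented out-degree. -/
def IsEulerianStructure {n : ℕ} (dir : Fin n → Fin n → Prop) (D : Sym2 (Fin n) → ℕ)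
    (A : Finset (Fin n × Fin n)) : Prop :=
  (∀ p ∈ A, dir p.1 p.2) ∧ ∀ v, augIn D A v = augOut D A v


open Finset MvPolynomial

lemma MvPolynomial.IsHomogeneous.sum_apply_eq_totalDegree {σ R : Type*} [Fintype σ]
    [CommSemiring R] {Q : MvPolynomial σ R} {d : ℕ} (hQ : Q.IsHomogeneous d) {m : σ →₀ ℕ}
    (hm : m ∈ Q.support) : ∑ i, m i = Q.totalDegree := by
  rw [hQ.totalDegree (support_nonempty.mp ⟨m, hm⟩), hQ.degree_eq_sum_deg_support hm,
    ← Finsupp.degree_apply, Finsupp.degree_eq_sum]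

section AlphaP

variable {n : ℕ}

lemma alphaP_le_of_mem_support {Q : MvPolynomial (Fin n) ℤ} {d : ℕ} (hQ : Q.IsHomogeneous d)
    {m : Fin n →₀ ℕ} (hm : m ∈ Q.support) {k : ℕ} (hk : ∀ i, m i ≤ k) : alphaP Q ≤ k :=
  Nat.sInf_le ⟨m, hm, hQ.sum_apply_eq_totalDegree hm, hk⟩

lemma exists_mem_support_le_alphaP {Q : MvPolynomial (Fin n) ℤ} (hQ : Q ≠ 0) :
    ∃ m ∈ Q.support, ∑ i, m i = Q.totalDegree ∧ ∀ i, m i ≤ alphaP Q := by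
  obtain ⟨m, hm, hmax⟩ :=
    exists_mem_eq_sup Q.support (support_nonempty.mpr hQ) fun s => s.sum fun _ e => e
  have hm_deg : ∑ i, m i = Q.totalDegree := by
    rw [totalDegree, hmax, Finsupp.sum_fintype _ _ fun _ => rfl]
  exact Nat.sInf_mem (s := {k | ∃ m ∈ Q.support, ∑ i, m i = Q.totalDegree ∧ ∀ i, m i ≤ k})
    ⟨univ.sup m, m, hm, hm_deg, fun i => le_sup (mem_univ i)⟩

lemma alphaP_le_alphaP_of_dvd {f g : MvPolynomial (Fin n) ℤ} {d : ℕ} (hf : f.IsHomogeneous d)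
    (hg : g ≠ 0) (hfg : f ∣ g) : alphaP f ≤ alphaP g := by
  obtain ⟨m, hm, -, hmα⟩ := exists_mem_support_le_alphaP hg
  obtain ⟨q, rfl⟩ := hfg
  obtain ⟨a, ha, b, -, rfl⟩ := mem_add.mp (support_mul f q hm)
  exact alphaP_le_of_mem_support hf ha fun i => (Nat.le_add_right _ _).trans (hmα i)

lemma alphaP_neg (Q : MvPolynomial (Fin n) ℤ) : alphaP (-Q) = alphaP Q := by
  simp only [alphaP, support_neg, totalDegree_neg]

lemma alphaP_neg_one_pow_mul (c : ℕ) (Q : MvPolynomial (Fin n) ℤ) :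
    alphaP ((-1) ^ c * Q) = alphaP Q := by
  rcases (neg_one_pow_eq_or _ c : (-1 : MvPolynomial (Fin n) ℤ) ^ c = 1 ∨ _) with h | h <;>
    simp only [h, one_mul, neg_one_mul, alphaP_neg]

end AlphaP

section ProdXPowSubXPow

variable {σ ι R : Type*} [CommRing R] (s : Finset ι) (head tail : ι → σ) (w : ι → ℕ)

theorem prod_X_pow_sub_X_pow_eq_sum :
    ∏ i ∈ s, (X (head i) ^ w i - X (tail i) ^ w i : MvPolynomial σ R) =
      ∑ A ∈ s.powerset, monomial (∑ i ∈ A, Finsupp.single (tail i) (w i) +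
        ∑ i ∈ s \ A, Finsupp.single (head i) (w i)) ((-1) ^ #A) := by
  simp_rw [sub_eq_neg_add, prod_add]
  refine sum_congr rfl fun A _ => ?_
  have hsign : ∏ i ∈ A, (-(X (tail i) ^ w i) : MvPolynomial σ R) =
      C ((-1) ^ #A) * ∏ i ∈ A, X (tail i) ^ w i := by
    simp only [neg_eq_neg_one_mul (X _ ^ _ : MvPolynomial σ R), prod_mul_distrib, prod_const,
      map_pow, map_neg, map_one]
  rw [hsign]
  simp only [X_pow_eq_monomial, ← monomial_sum_one, monomial_mul, C_mul_monomial, mul_one]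

theorem coeff_sum_single_head_prod_X_pow_sub_X_pow :
    coeff (∑ i ∈ s, Finsupp.single (head i) (w i))
        (∏ i ∈ s, (X (head i) ^ w i - X (tail i) ^ w i : MvPolynomial σ R)) =
      ∑ A ∈ s.powerset with
        ∑ i ∈ A, Finsupp.single (tail i) (w i) = ∑ i ∈ A, Finsupp.single (head i) (w i),
        (-1) ^ #A := by
  rw [prod_X_pow_sub_X_pow_eq_sum, coeff_sum, sum_filter]
  refine sum_congr rfl fun A hA => ?_
  rw [coeff_monomial]
  refine if_congr ?_ rfl rfl
  rw [← sum_sdiff (mem_powerset.mp hA), add_comm _ (∑ i ∈ A, _), add_left_inj]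

theorem isHomogeneous_prod_X_pow_sub_X_pow :
    (∏ i ∈ s, (X (head i) ^ w i - X (tail i) ^ w i : MvPolynomial σ R)).IsHomogeneous
      (∑ i ∈ s, w i) :=
  IsHomogeneous.prod _ _ _ fun _ _ => (isHomogeneous_X_pow _ _).sub (isHomogeneous_X_pow _ _)

end ProdXPowSubXPow

lemma Finsupp.finsetSum_single_apply {ι σ M : Type*} [AddCommMonoid M] (s : Finset ι)
    (f : ι → σ) (w : ι → M) (v : σ) :
    (∑ i ∈ s, Finsupp.single (f i) (w i)) v = ∑ i ∈ s with f i = v, w i := by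
  simp only [Finsupp.finsetSum_apply, Finsupp.single_apply, sum_filter]

lemma sum_neg_one_pow_card {α : Type*} (T : Finset (Finset α)) :
    ∑ A ∈ T, (-1 : ℤ) ^ #A = #{A ∈ T | Even #A} - #{A ∈ T | Odd #A} := by
  have h_even : ∑ A ∈ T with Even #A, (-1 : ℤ) ^ #A = #{A ∈ T | Even #A} := by
    rw [card_eq_sum_ones, Nat.cast_sum, Nat.cast_one]
    exact sum_congr rfl fun A hA => (mem_filter.mp hA).2.neg_one_pow
  have h_odd : ∑ A ∈ T with ¬Even #A, (-1 : ℤ) ^ #A = -#{A ∈ T | Odd #A} := by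
    rw [card_eq_sum_ones, Nat.cast_sum, Nat.cast_one, ← sum_neg_distrib]
    simp only [Nat.not_even_iff_odd]
    exact sum_congr rfl fun A hA => (mem_filter.mp hA).2.neg_one_pow
  rw [← sum_filter_add_sum_filter_not T fun A => Even #A, h_even, h_odd, sub_eq_add_neg]

section AugmentedOrientation

variable {n : ℕ}

lemma isHomogeneous_graphPoly (G : SimpleGraph (Fin n)) :
    (graphPoly G).IsHomogeneous #{p : Fin n × Fin n | p.1 < p.2 ∧ G.Adj p.1 p.2} := by
  unfold graphPoly
  simpa using IsHomogeneous.prod _ _ (fun _ => 1)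
    fun p _ => (isHomogeneous_X ℤ p.1).sub (isHomogeneous_X ℤ p.2)

lemma graphPoly_dvd_augPoly (G : SimpleGraph (Fin n)) (D : Sym2 (Fin n) → ℕ) :
    graphPoly G ∣ augPoly G D :=
  prod_dvd_prod_of_dvd _ _ fun _ _ => sub_dvd_pow_sub_pow _ _ _

noncomputable def arcs (dir : Fin n → Fin n → Prop) : Finset (Fin n × Fin n) := {a | dir a.1 a.2}

noncomputable def arcPoly (dir : Fin n → Fin n → Prop) (D : Sym2 (Fin n) → ℕ) :
    MvPolynomial (Fin n) ℤ :=
  ∏ a ∈ arcs dir, (X a.2 ^ D s(a.1, a.2) - X a.1 ^ D s(a.1, a.2))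

noncomputable def augInDegree (dir : Fin n → Fin n → Prop) (D : Sym2 (Fin n) → ℕ) :
    Fin n →₀ ℕ :=
  ∑ a ∈ arcs dir, Finsupp.single a.2 (D s(a.1, a.2))

lemma arcPoly_eq_prod_sign_mul {G : SimpleGraph (Fin n)} {dir : Fin n → Fin n → Prop}
    (hor : IsOrientation G dir) (D : Sym2 (Fin n) → ℕ) :
    arcPoly dir D = ∏ p : Fin n × Fin n with p.1 < p.2 ∧ G.Adj p.1 p.2,
      (if dir p.1 p.2 then -1 else 1) * (X p.1 ^ D s(p.1, p.2) - X p.2 ^ D s(p.1, p.2)) := by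
  refine prod_nbij' (fun a => if a.1 < a.2 then a else a.swap)
    (fun p => if dir p.1 p.2 then p else p.swap) ?_ ?_ ?_ ?_ ?_
  · intro a ha
    have hadj : G.Adj a.1 a.2 := hor.1 _ _ (by simpa [arcs] using ha)
    rcases lt_or_gt_of_ne hadj.ne with h | h
    · simp [h, hadj]
    · simp [h.not_gt, h, hadj.symm]
  · intro p hp
    simp only [mem_filter, mem_univ, true_and] at hp
    by_cases h : dir p.1 p.2
    · simp [arcs, h]
    · simpa [arcs, h] using (hor.2 _ _ hp.2.symm).2 h
  · intro a ha
    have hdir : dir a.1 a.2 := by simpa [arcs] using ha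
    by_cases h : a.1 < a.2
    · simp [h, hdir]
    · simp [h, (hor.2 _ _ (hor.1 _ _ hdir)).1 hdir]
  · intro p hp
    simp only [mem_filter, mem_univ, true_and] at hp
    by_cases h : dir p.1 p.2
    · simp [h, hp.1]
    · simp [h, hp.1.not_gt]
  · intro a ha
    have hdir : dir a.1 a.2 := by simpa [arcs] using ha
    by_cases h : a.1 < a.2
    · simp [h, hdir]
    · simp [h, (hor.2 _ _ (hor.1 _ _ hdir)).1 hdir, Sym2.eq_swap]

lemma augPoly_eq_neg_one_pow_mul_arcPoly {G : SimpleGraph (Fin n)} {dir : Fin n → Fin n → Prop}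
    (hor : IsOrientation G dir) (D : Sym2 (Fin n) → ℕ) :
    ∃ c : ℕ, augPoly G D = (-1) ^ c * arcPoly dir D := by
  refine ⟨#{p : Fin n × Fin n | (p.1 < p.2 ∧ G.Adj p.1 p.2) ∧ dir p.1 p.2}, ?_⟩
  rw [arcPoly_eq_prod_sign_mul hor, prod_mul_distrib, prod_ite, prod_const, prod_const_one,
    mul_one, filter_filter, ← mul_assoc, ← mul_pow, neg_one_mul, neg_neg, one_pow, one_mul, augPoly]

lemma augInDegree_apply (dir : Fin n → Fin n → Prop) (D : Sym2 (Fin n) → ℕ) (v : Fin n) :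
    augInDegree dir D v = ∑ u ∈ univ.filter (fun u => dir u v), D s(u, v) := by
  rw [augInDegree, Finsupp.finsetSum_single_apply, arcs, filter_filter]
  refine sum_nbij' Prod.fst (fun u => (u, v)) ?_ ?_ ?_ ?_ ?_ <;> aesop

lemma isEulerianStructure_iff (dir : Fin n → Fin n → Prop) (D : Sym2 (Fin n) → ℕ)
    (A : Finset (Fin n × Fin n)) :
    IsEulerianStructure dir D A ↔ A ⊆ arcs dir ∧
      ∑ a ∈ A, Finsupp.single a.1 (D s(a.1, a.2)) =
        ∑ a ∈ A, Finsupp.single a.2 (D s(a.1, a.2)) := by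
  simp only [IsEulerianStructure, Finsupp.ext_iff, Finsupp.finsetSum_single_apply, augIn, augOut,
    subset_iff, arcs, mem_filter, mem_univ, true_and, eq_comm]

lemma coeff_augInDegree_arcPoly (dir : Fin n → Fin n → Prop) (D : Sym2 (Fin n) → ℕ) :
    coeff (augInDegree dir D) (arcPoly dir D) =
      #{A : Finset (Fin n × Fin n) | IsEulerianStructure dir D A ∧ Even #A} -
        #{A : Finset (Fin n × Fin n) | IsEulerianStructure dir D A ∧ Odd #A} := by
  rw [augInDegree, arcPoly, coeff_sum_single_head_prod_X_pow_sub_X_pow, sum_neg_one_pow_card]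
  congr 3 <;> ext A <;>
    simp only [mem_filter, mem_powerset, mem_univ, true_and, isEulerianStructure_iff, and_assoc]

end AugmentedOrientation

theorem AT_le_of_eulerian_structure_counts_general {n : ℕ} (G : SimpleGraph (Fin n))
    (dir : Fin n → Fin n → Prop) (D : Sym2 (Fin n) → ℕ) (k : ℕ)
    (hor : IsOrientation G dir)
    (hk : ∀ v, ∑ u ∈ Finset.univ.filter (fun u => dir u v), D s(u, v) ≤ k)
    (hne : (Finset.univ.filter fun A : Finset (Fin n × Fin n) =>
              IsEulerianStructure dir D A ∧ Even A.card).card ≠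
           (Finset.univ.filter fun A : Finset (Fin n × Fin n) =>
              IsEulerianStructure dir D A ∧ Odd A.card).card) :
    AT G - 1 ≤ alphaP (augPoly G D) ∧ alphaP (augPoly G D) ≤ k := by
  obtain ⟨c, hW⟩ := augPoly_eq_neg_one_pow_mul_arcPoly hor D
  have hcoeff : coeff (augInDegree dir D) (arcPoly dir D) ≠ 0 := by
    rw [coeff_augInDegree_arcPoly, sub_ne_zero]
    exact_mod_cast hne
  have hW_ne_zero : augPoly G D ≠ 0 := by
    rw [hW]
    exact mul_ne_zero (pow_ne_zero _ (neg_ne_zero.mpr one_ne_zero))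
      fun h => hcoeff (by rw [h, coeff_zero])
  refine ⟨?_, ?_⟩
  · calc AT G - 1 = alphaP (graphPoly G) := Nat.add_sub_cancel _ _
      _ ≤ alphaP (augPoly G D) :=
        alphaP_le_alphaP_of_dvd (isHomogeneous_graphPoly G) hW_ne_zero (graphPoly_dvd_augPoly G D)
  · rw [hW, alphaP_neg_one_pow_mul]
    exact alphaP_le_of_mem_support (isHomogeneous_prod_X_pow_sub_X_pow _ _ _ _)
      (mem_support_iff.mpr hcoeff) fun v => (augInDegree_apply dir D v).trans_le (hk v)

/-- If in an augmented orientation `(G, D, O)` with maximum augmented in-degree `k` the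
numbers of even and odd Eulerian structures differ, then
`AT(G) - 1 ≤ α(W_{G,D}) ≤ k`. -/
theorem AT_le_of_eulerian_structure_counts {n : ℕ} (G : SimpleGraph (Fin n))
    (dir : Fin n → Fin n → Prop) (D : Sym2 (Fin n) → ℕ) (k : ℕ)
    (hor : IsOrientation G dir) (hD : ∀ e ∈ G.edgeSet, 0 < D e)
    (hk : ∀ v, ∑ u ∈ Finset.univ.filter (fun u => dir u v), D s(u, v) ≤ k)
    (hne : (Finset.univ.filter fun A : Finset (Fin n × Fin n) =>
              IsEulerianStructure dir D A ∧ Even A.card).card ≠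
           (Finset.univ.filter fun A : Finset (Fin n × Fin n) =>
              IsEulerianStructure dir D A ∧ Odd A.card).card) :
    AT G - 1 ≤ alphaP (augPoly G D) ∧ alphaP (augPoly G D) ≤ k :=
  AT_le_of_eulerian_structure_counts_general G dir D k hor hk hne
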